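/- arXiv:1310.3896 — 5 statements merged into one kernel-verified Lean document; each statement's English description precedes it below -/
import Mathlib

section
/- For every integer r ≥ 1 there exists an open interval Λ_r ⊂ ℝ containing λ_c such that, setting η_c(r) := inf over λ ∈ Λ_r of min over 1 ≤ j ≤ m of β_j(λ), and η_s(r) := sup over λ ∈ Λ_r of sup over j ≥ m+1 of β_j(λ), both quantities are finite and 0 > r·η_c(r) > η_s(r). Moreover Λ_r can be chosen so that η_c(r) ≥ τ/(4r) and η_s(r) ≤ 3τ/4, where τ := β_{m+1}(λ_c) < 0. -/
open MeasureTheory ProbabilityTheory Filter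
open scoped ENNReal NNReal

/-- Lemma 5.1: under the principle of exchange of stabilities, for every `r ≥ 1`
there is an open interval `Λ_r` around `λ_c` on which `0 > r η_c(r) > η_s(r)`,
with moreover `η_c(r) ≥ τ/(4r)` and `η_s(r) ≤ 3τ/4` where `τ = β_{m+1}(λ_c) < 0`. -/
theorem uniform_spectrum_decomposition_from_PES
    (m : ℕ) (hm : 1 ≤ m) (lamc : ℝ) (β : ℕ → ℝ → ℝ)
    (hmono : ∀ lam : ℝ, ∀ j j' : ℕ, 1 ≤ j → j ≤ j' → β j' lam ≤ β j lam)
    (hcont : ∀ j : ℕ, 1 ≤ j → Continuous fun lam => β j lam)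
    (hPES_zero : ∀ j : ℕ, 1 ≤ j → j ≤ m → β j lamc = 0)
    (hPES_neg : ∀ j : ℕ, 1 ≤ j → j ≤ m → ∀ lam : ℝ, lam < lamc → β j lam < 0)
    (hPES_stable : β (m + 1) lamc < 0) :
    ∀ r : ℕ, 1 ≤ r →
      ∃ a b : ℝ, a < b ∧ lamc ∈ Set.Ioo a b ∧
        ∃ ηc ηs : ℝ,
          IsGLB {x : ℝ | ∃ lam ∈ Set.Ioo a b, ∃ j : ℕ, 1 ≤ j ∧ j ≤ m ∧ x = β j lam} ηc ∧
          IsLUB {x : ℝ | ∃ lam ∈ Set.Ioo a b, ∃ j : ℕ, m + 1 ≤ j ∧ x = β j lam} ηs ∧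
          (r : ℝ) * ηc < 0 ∧ ηs < (r : ℝ) * ηc ∧
          β (m + 1) lamc / (4 * (r : ℝ)) ≤ ηc ∧ ηs ≤ 3 * β (m + 1) lamc / 4 := by
  intro r hr
  set τ := β (m + 1) lamc with hτdef
  have hτneg : τ < 0 := hPES_stable
  have hrpos : (0 : ℝ) < (r : ℝ) := by exact_mod_cast hr
  have hquot_neg : τ / (4 * (r : ℝ)) < 0 := div_neg_of_neg_of_pos hτneg (by positivity)
  -- the open set where all first m eigenvalues are above τ/(4r) and the (m+1)-st below 3τ/4
  set U : Set ℝ :=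
    {lam : ℝ | (∀ j ∈ Finset.Icc 1 m, τ / (4 * (r : ℝ)) < β j lam) ∧ β (m + 1) lam < 3 * τ / 4}
    with hUdef
  have hUopen : IsOpen U := by
    rw [hUdef, Set.setOf_and]
    apply IsOpen.inter
    · have heq : {lam : ℝ | ∀ j ∈ Finset.Icc 1 m, τ / (4 * (r : ℝ)) < β j lam}
          = ⋂ j ∈ Finset.Icc 1 m, {lam : ℝ | τ / (4 * (r : ℝ)) < β j lam} := by
        ext lam; simp
      rw [heq]
      exact isOpen_biInter_finset fun j hj =>
        isOpen_lt continuous_const (hcont j (Finset.mem_Icc.mp hj).1)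
    · exact isOpen_lt (hcont (m + 1) (by omega)) continuous_const
  have hmem : lamc ∈ U := by
    constructor
    · intro j hj
      rcases Finset.mem_Icc.mp hj with ⟨h1, h2⟩
      rw [hPES_zero j h1 h2]
      exact hquot_neg
    · rw [← hτdef]; linarith
  rcases Metric.isOpen_iff.mp hUopen lamc hmem with ⟨ε, hε, hball⟩
  have hball' : Set.Ioo (lamc - ε) (lamc + ε) ⊆ U := by
    rw [← Real.ball_eq_Ioo]; exact hball
  refine ⟨lamc - ε, lamc + ε, by linarith, ⟨by linarith, by linarith⟩, ?_⟩
  set Sc : Set ℝ :=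
    {x : ℝ | ∃ lam ∈ Set.Ioo (lamc - ε) (lamc + ε), ∃ j : ℕ, 1 ≤ j ∧ j ≤ m ∧ x = β j lam}
  set Ss : Set ℝ :=
    {x : ℝ | ∃ lam ∈ Set.Ioo (lamc - ε) (lamc + ε), ∃ j : ℕ, m + 1 ≤ j ∧ x = β j lam}
  have hScne : Sc.Nonempty :=
    ⟨β 1 lamc, lamc, ⟨by linarith, by linarith⟩, 1, le_refl 1, hm, rfl⟩
  have hScbdd : ∀ x ∈ Sc, τ / (4 * (r : ℝ)) ≤ x := by
    rintro x ⟨lam, hlam, j, hj1, hjm, rfl⟩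
    exact le_of_lt ((hball' hlam).1 j (Finset.mem_Icc.mpr ⟨hj1, hjm⟩))
  have hSsne : Ss.Nonempty :=
    ⟨β (m + 1) lamc, lamc, ⟨by linarith, by linarith⟩, m + 1, le_refl _, rfl⟩
  have hSsbdd : ∀ x ∈ Ss, x ≤ 3 * τ / 4 := by
    rintro x ⟨lam, hlam, j, hj, rfl⟩
    have h1 : β j lam ≤ β (m + 1) lam := hmono lam (m + 1) j (by omega) hj
    have h2 : β (m + 1) lam < 3 * τ / 4 := (hball' hlam).2
    linarith
  refine ⟨sInf Sc, sSup Ss, isGLB_csInf hScne ⟨_, hScbdd⟩, isLUB_csSup hSsne ⟨_, hSsbdd⟩, ?_, ?_, ?_, ?_⟩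
  · -- r * sInf Sc < 0
    have hmemc : β 1 (lamc - ε / 2) ∈ Sc :=
      ⟨lamc - ε / 2, ⟨by linarith, by linarith⟩, 1, le_refl 1, hm, rfl⟩
    have hneg : β 1 (lamc - ε / 2) < 0 := hPES_neg 1 (le_refl 1) hm _ (by linarith)
    have hle : sInf Sc ≤ β 1 (lamc - ε / 2) := csInf_le ⟨_, hScbdd⟩ hmemc
    exact mul_neg_of_pos_of_neg hrpos (by linarith)
  · -- sSup Ss < r * sInf Sc
    have h1 : sSup Ss ≤ 3 * τ / 4 := csSup_le hSsne hSsbdd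
    have h2 : τ / (4 * (r : ℝ)) ≤ sInf Sc := le_csInf hScne hScbdd
    have h3 : (r : ℝ) * (τ / (4 * (r : ℝ))) ≤ (r : ℝ) * sInf Sc :=
      mul_le_mul_of_nonneg_left h2 (le_of_lt hrpos)
    have h4 : (r : ℝ) * (τ / (4 * (r : ℝ))) = τ / 4 := by
      field_simp
    linarith
  · exact le_csInf hScne hScbdd
  · exact csSup_le hSsne hSsbdd
end

section
/- The pathwise Ornstein–Uhlenbeck function z inherits the sublinear growth of w: z(t)/t → 0 as t → ±∞, and moreover (1/t) ∫₀ᵗ z(s) ds → 0 as t → ±∞. -/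
open MeasureTheory ProbabilityTheory Filter
open scoped ENNReal NNReal

set_option maxHeartbeats 1000000
open Set

-- integrability of exp * |·| on Iic 0
lemma ou_aux_exp_abs_int : IntegrableOn (fun s : ℝ => Real.exp s * |s|) (Set.Iic (0:ℝ)) := by
  refine integrableOn_Iic_of_intervalIntegral_norm_bounded (f := fun s : ℝ => Real.exp s * |s|)
    (a := id) (l := atBot) 1 0 (fun i => ?_) tendsto_id ?_
  · exact ((Real.continuous_exp.mul continuous_abs)).integrableOn_Ioc
  · filter_upwards [Iic_mem_atBot (0:ℝ)] with y hy
    have hy0 : y ≤ 0 := hy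
    have heq : (∫ s in y..(0:ℝ), ‖Real.exp s * |s|‖) = ∫ s in y..(0:ℝ), Real.exp s * (-s) := by
      apply intervalIntegral.integral_congr
      intro s hs
      simp only
      rw [Set.uIcc_of_le hy0] at hs
      have hs0 : s ≤ 0 := hs.2
      rw [Real.norm_eq_abs, abs_of_nonneg (by positivity), abs_of_nonpos hs0]
    simp only [id]
    rw [heq]
    have hderiv : ∀ s ∈ Set.uIcc y 0, HasDerivAt (fun s => (1 - s) * Real.exp s)
        (Real.exp s * (-s)) s := by
      intro s _
      have h1 : HasDerivAt (fun s : ℝ => (1 - s)) (-1) s := by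
        simpa using (hasDerivAt_id s).const_sub 1
      have := h1.mul (Real.hasDerivAt_exp s)
      exact this.congr_deriv (by ring)
    rw [intervalIntegral.integral_eq_sub_of_hasDerivAt hderiv
      (((Real.continuous_exp.mul (continuous_id.neg))).intervalIntegrable y 0)]
    have : 0 ≤ (1 - y) * Real.exp y := by
      have := Real.exp_pos y
      nlinarith
    simp only [sub_zero, one_mul, Real.exp_zero]
    linarith

lemma ou_aux_exp_abs_int' (t : ℝ) :
    IntegrableOn (fun s : ℝ => Real.exp s * |s|) (Set.Iic t) := by
  have h2 : IntegrableOn (fun s : ℝ => Real.exp s * |s|) (Set.Icc 0 (max 0 t)) :=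
    (Real.continuous_exp.mul continuous_abs).integrableOn_Icc
  refine (ou_aux_exp_abs_int.union h2).mono_set fun s hs => ?_
  rcases le_or_gt s 0 with h | h
  · exact Or.inl h
  · exact Or.inr ⟨h.le, le_max_of_le_right hs⟩

lemma ou_sublinear_bound (w : ℝ → ℝ) (hw : Continuous w)
    (hwTop : Tendsto (fun t => w t / t) atTop (nhds 0))
    (hwBot : Tendsto (fun t => w t / t) atBot (nhds 0)) :
    ∀ ε > 0, ∃ C : ℝ, 0 ≤ C ∧ ∀ s, |w s| ≤ ε * |s| + C := by
  intro ε hε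
  have hT : ∀ᶠ t in atTop, |w t / t| < ε := by
    have := Metric.tendsto_nhds.mp hwTop ε hε
    simpa [Real.dist_eq, abs_div] using this
  have hB : ∀ᶠ t in atBot, |w t / t| < ε := by
    have := Metric.tendsto_nhds.mp hwBot ε hε
    simpa [Real.dist_eq, abs_div] using this
  obtain ⟨A, hA⟩ := eventually_atTop.mp hT
  obtain ⟨B, hB'⟩ := eventually_atBot.mp hB
  set a : ℝ := min B (-1) with ha
  set b : ℝ := max A 1 with hb
  obtain ⟨C, hC⟩ := (isCompact_Icc (a := a) (b := b)).exists_bound_of_continuousOn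
    hw.continuousOn
  refine ⟨max C 0, le_max_right _ _, fun s => ?_⟩
  have habs : ∀ s : ℝ, s ≠ 0 → |w s / s| < ε → |w s| ≤ ε * |s| := by
    intro s hs h
    rw [abs_div, div_lt_iff₀ (abs_pos.mpr hs)] at h
    linarith
  rcases le_or_gt s b with hsb | hsb
  · rcases le_or_gt a s with has | has
    · have := hC s ⟨has, hsb⟩
      rw [Real.norm_eq_abs] at this
      have h1 : 0 ≤ ε * |s| := by positivity
      have h2 : C ≤ max C 0 := le_max_left _ _
      linarith
    · have hs1 : s ≤ B := le_of_lt (lt_of_lt_of_le has (min_le_left _ _))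
      have hs0 : s ≠ 0 := by
        have : s < -1 := lt_of_lt_of_le has (min_le_right _ _)
        linarith
      have := habs s hs0 (hB' s hs1)
      have h2 : (0:ℝ) ≤ max C 0 := le_max_right _ _
      linarith
  · have hs1 : A ≤ s := le_of_lt (lt_of_le_of_lt (le_max_left _ _) hsb)
    have hs0 : s ≠ 0 := by
      have : (1:ℝ) < s := lt_of_le_of_lt (le_max_right _ _) hsb
      linarith
    have := habs s hs0 (hA s hs1)
    have h2 : (0:ℝ) ≤ max C 0 := le_max_right _ _
    linarith

lemma ou_tendsto_of_bound (f : ℝ → ℝ)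
    (h : ∀ ε > 0, ∃ D : ℝ, 0 ≤ D ∧ ∀ t, |f t| ≤ ε * |t| + D) :
    Tendsto (fun t => f t / t) atTop (nhds 0) ∧
      Tendsto (fun t => f t / t) atBot (nhds 0) := by
  constructor
  · rw [NormedAddCommGroup.tendsto_nhds_zero]
    intro ε hε
    obtain ⟨D, hD0, hD⟩ := h (ε/2) (by linarith)
    filter_upwards [eventually_ge_atTop (max 1 (2*D/ε + 1))] with t ht
    have ht1 : (1:ℝ) ≤ t := le_trans (le_max_left _ _) ht
    have ht2 : 2*D/ε + 1 ≤ t := le_trans (le_max_right _ _) ht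
    have ht0 : (0:ℝ) < t := by linarith
    have hDt : 2*D/ε ≤ t - 1 := by linarith
    have h2 : 2*D ≤ ε * (t-1) := by
      rw [div_le_iff₀ hε] at hDt
      linarith
    have := hD t
    rw [abs_of_pos ht0] at this
    rw [Real.norm_eq_abs, abs_div, abs_of_pos ht0, div_lt_iff₀ ht0]
    nlinarith
  · rw [NormedAddCommGroup.tendsto_nhds_zero]
    intro ε hε
    obtain ⟨D, hD0, hD⟩ := h (ε/2) (by linarith)
    filter_upwards [eventually_le_atBot (min (-1) (-(2*D/ε + 1)))] with t ht
    have ht1 : t ≤ -1 := le_trans ht (min_le_left _ _)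
    have ht2 : t ≤ -(2*D/ε + 1) := le_trans ht (min_le_right _ _)
    have ht0 : t < 0 := by linarith
    have h2 : 2*D ≤ ε * (-t-1) := by
      have : 2*D/ε ≤ -t - 1 := by linarith
      rw [div_le_iff₀ hε] at this
      linarith
    have := hD t
    rw [abs_of_neg ht0] at this
    rw [Real.norm_eq_abs, abs_div, abs_of_neg ht0, div_lt_iff₀ (by linarith : (0:ℝ) < -t)]
    nlinarith


/-- The pathwise Ornstein–Uhlenbeck function `z` inherits the sublinear growth of
`w`: `z(t)/t → 0` as `t → ±∞`, and also `(1/t) ∫₀ᵗ z(s) ds → 0` as `t → ±∞`. -/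
theorem ou_sublinear_growth
    (σ : ℝ) (w : ℝ → ℝ) (hw : Continuous w) (hw0 : w 0 = 0)
    (hwTop : Filter.Tendsto (fun t => w t / t) Filter.atTop (nhds 0))
    (hwBot : Filter.Tendsto (fun t => w t / t) Filter.atBot (nhds 0))
    (z : ℝ → ℝ)
    (hz : ∀ t : ℝ,
      z t = -σ * (∫ τ in Set.Iic (0 : ℝ), Real.exp τ * w (τ + t)) + σ * w t) :
    (Filter.Tendsto (fun t => z t / t) Filter.atTop (nhds 0) ∧
      Filter.Tendsto (fun t => z t / t) Filter.atBot (nhds 0)) ∧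
    (Filter.Tendsto (fun t => (1 / t) * ∫ s in (0 : ℝ)..t, z s) Filter.atTop (nhds 0) ∧
      Filter.Tendsto (fun t => (1 / t) * ∫ s in (0 : ℝ)..t, z s) Filter.atBot (nhds 0)) := by
  set I : ℝ → ℝ := fun t => ∫ τ in Set.Iic (0:ℝ), Real.exp τ * w (τ + t) with hIdef
  obtain ⟨C₁, hC₁0, hC₁⟩ := ou_sublinear_bound w hw hwTop hwBot 1 one_pos
  have hg_cont : Continuous (fun s : ℝ => Real.exp s * w s) := Real.continuous_exp.mul hw
  -- integrability of the integrand, for each t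
  have hint : ∀ t : ℝ, IntegrableOn (fun τ => Real.exp τ * w (τ + t)) (Set.Iic (0:ℝ)) := by
    intro t
    have hdom : IntegrableOn
        (fun τ : ℝ => Real.exp τ * |τ| + (|t| + C₁) * Real.exp τ) (Set.Iic (0:ℝ)) :=
      ou_aux_exp_abs_int.add ((integrableOn_exp_Iic 0).const_mul _)
    refine hdom.mono' ?_ (Filter.Eventually.of_forall fun τ => ?_)
    · exact (Real.continuous_exp.mul
        (hw.comp (continuous_id.add continuous_const))).aestronglyMeasurable.restrict
    · have h1 := hC₁ (τ + t)
      have h2 : |τ + t| ≤ |τ| + |t| := abs_add_le _ _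
      have h3 := Real.exp_pos τ
      rw [Real.norm_eq_abs, abs_mul, abs_of_pos h3]
      nlinarith [abs_nonneg (w (τ + t))]
  have hg_int : ∀ t : ℝ, IntegrableOn (fun s : ℝ => Real.exp s * w s) (Set.Iic t) := by
    intro t
    have hdom : IntegrableOn
        (fun s : ℝ => Real.exp s * |s| + C₁ * Real.exp s) (Set.Iic t) :=
      (ou_aux_exp_abs_int' t).add ((integrableOn_exp_Iic t).const_mul _)
    refine hdom.mono' hg_cont.aestronglyMeasurable.restrict
      (Filter.Eventually.of_forall fun s => ?_)
    have h1 := hC₁ s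
    have h3 := Real.exp_pos s
    rw [Real.norm_eq_abs, abs_mul, abs_of_pos h3]
    nlinarith [abs_nonneg (w s)]
  -- sublinear bound on I
  have hIbound : ∀ ε > 0, ∃ D : ℝ, 0 ≤ D ∧ ∀ t, |I t| ≤ ε * |t| + D := by
    intro ε hε
    obtain ⟨C, hC0, hC⟩ := ou_sublinear_bound w hw hwTop hwBot ε hε
    set A : ℝ := ∫ τ in Set.Iic (0:ℝ), Real.exp τ * |τ| with hA
    have hA0 : 0 ≤ A :=
      setIntegral_nonneg measurableSet_Iic (fun τ _ => by positivity)
    refine ⟨ε * A + C, by positivity, fun t => ?_⟩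
    have h1 : |I t| ≤ ∫ τ in Set.Iic (0:ℝ), ‖Real.exp τ * w (τ + t)‖ := by
      simpa [Real.norm_eq_abs] using
        norm_integral_le_integral_norm (μ := volume.restrict (Set.Iic (0:ℝ)))
          (fun τ => Real.exp τ * w (τ + t))
    have hdom_int : IntegrableOn
        (fun τ : ℝ => ε * (Real.exp τ * |τ|) + (ε * |t| + C) * Real.exp τ)
        (Set.Iic (0:ℝ)) :=
      (ou_aux_exp_abs_int.const_mul ε).add ((integrableOn_exp_Iic 0).const_mul _)
    have h2 : (∫ τ in Set.Iic (0:ℝ), ‖Real.exp τ * w (τ + t)‖) ≤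
        ∫ τ in Set.Iic (0:ℝ),
          (ε * (Real.exp τ * |τ|) + (ε * |t| + C) * Real.exp τ) := by
      refine setIntegral_mono_on (hint t).norm hdom_int measurableSet_Iic fun τ _ => ?_
      have hb := hC (τ + t)
      have h2' : |τ + t| ≤ |τ| + |t| := abs_add_le _ _
      have h3 := Real.exp_pos τ
      rw [Real.norm_eq_abs, abs_mul, abs_of_pos h3]
      have hb2 : |w (τ + t)| ≤ ε * (|τ| + |t|) + C := by nlinarith
      calc Real.exp τ * |w (τ + t)| ≤ Real.exp τ * (ε * (|τ| + |t|) + C) :=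
            mul_le_mul_of_nonneg_left hb2 h3.le
        _ = ε * (Real.exp τ * |τ|) + (ε * |t| + C) * Real.exp τ := by ring
    have h3 : (∫ τ in Set.Iic (0:ℝ),
          (ε * (Real.exp τ * |τ|) + (ε * |t| + C) * Real.exp τ)) =
        ε * A + (ε * |t| + C) := by
      rw [integral_add (ou_aux_exp_abs_int.const_mul ε)
        ((integrableOn_exp_Iic 0).const_mul _), integral_const_mul, integral_const_mul,
        integral_exp_Iic_zero, mul_one]
    have := h1.trans (h2.trans_eq h3)
    linarith
  have hIT := ou_tendsto_of_bound I hIbound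
  -- change of variables : I t = exp (-t) * ∫_{Iic t} exp s * w s
  have hIeq : ∀ t : ℝ, I t = Real.exp (-t) * ∫ s in Set.Iic t, Real.exp s * w s := by
    intro t
    have hemb := (Homeomorph.addRight t).isClosedEmbedding.measurableEmbedding
    have hmp := measurePreserving_add_right (volume : Measure ℝ) t
    have key := hmp.setIntegral_preimage_emb hemb
      (fun s => Real.exp s * w s) (Set.Iic t)
    have hpre : (fun x : ℝ => x + t) ⁻¹' Set.Iic t = Set.Iic (0:ℝ) := by
      ext x
      simp only [Set.mem_preimage, Set.mem_Iic]
      constructor <;> intro h <;> linarith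
    rw [hpre] at key
    calc I t = ∫ τ in Set.Iic (0:ℝ),
          Real.exp (-t) * (Real.exp (τ + t) * w (τ + t)) := by
          refine setIntegral_congr_fun measurableSet_Iic fun τ _ => ?_
          rw [← mul_assoc, ← Real.exp_add]
          ring_nf
      _ = Real.exp (-t) * ∫ τ in Set.Iic (0:ℝ), Real.exp (τ + t) * w (τ + t) :=
          integral_const_mul _ _
      _ = Real.exp (-t) * ∫ s in Set.Iic t, Real.exp s * w s := by rw [key]
  set K : ℝ := ∫ s in Set.Iic (0:ℝ), Real.exp s * w s with hK
  have hsplit : ∀ t : ℝ, (∫ s in Set.Iic t, Real.exp s * w s) =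
      K + ∫ s in (0:ℝ)..t, Real.exp s * w s := by
    intro t
    have := intervalIntegral.integral_Iic_sub_Iic (hg_int 0) (hg_int t)
    linarith
  -- derivative of I
  have hIderiv : ∀ t : ℝ, HasDerivAt I (w t - I t) t := by
    intro t
    have hF : HasDerivAt (fun u => ∫ s in (0:ℝ)..u, Real.exp s * w s)
        (Real.exp t * w t) t :=
      intervalIntegral.integral_hasDerivAt_right (hg_cont.intervalIntegrable 0 t)
        hg_cont.aestronglyMeasurable.stronglyMeasurableAtFilter hg_cont.continuousAt
    have h1 : HasDerivAt (fun u : ℝ => Real.exp (-u)) (-Real.exp (-t)) t := by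
      simpa [Function.comp_def] using (Real.hasDerivAt_exp (-t)).comp t ((hasDerivAt_id t).neg)
    have h2 : HasDerivAt (fun u => K + ∫ s in (0:ℝ)..u, Real.exp s * w s)
        (Real.exp t * w t) t := hF.const_add K
    have h3 := h1.mul h2
    have hIe : I = fun u => Real.exp (-u) * (K + ∫ s in (0:ℝ)..u, Real.exp s * w s) := by
      funext u
      rw [hIeq u, hsplit u]
    have hmul : Real.exp (-t) * Real.exp t = 1 := by
      rw [← Real.exp_add]; simp
    have h4 : HasDerivAt I
        (-Real.exp (-t) * (K + ∫ s in (0:ℝ)..t, Real.exp s * w s) +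
          Real.exp (-t) * (Real.exp t * w t)) t := by
      rw [hIe]; exact h3
    convert h4 using 1
    rw [hIeq t, hsplit t]
    linear_combination (-(w t)) * hmul
  have hIcont : Continuous I :=
    continuous_iff_continuousAt.mpr fun t => (hIderiv t).continuousAt
  have hzI : ∀ t : ℝ, z t = σ * (w t - I t) := by
    intro t; rw [hz t]; ring
  have hzcont : Continuous z := by
    have : z = fun t => σ * (w t - I t) := funext hzI
    rw [this]
    exact continuous_const.mul (hw.sub hIcont)
  have hzderiv : ∀ t : ℝ, HasDerivAt (fun u => σ * I u) (z t) t := by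
    intro t
    rw [hzI t]
    exact (hIderiv t).const_mul σ
  have hFTC : ∀ t : ℝ, (∫ s in (0:ℝ)..t, z s) = σ * I t - σ * I 0 := by
    intro t
    exact intervalIntegral.integral_eq_sub_of_hasDerivAt (fun s _ => hzderiv s)
      (hzcont.intervalIntegrable 0 t)
  have hinvTop : Tendsto (fun t : ℝ => 1 / t) atTop (nhds 0) := by
    simpa [one_div] using tendsto_inv_atTop_zero
  have hinvBot : Tendsto (fun t : ℝ => 1 / t) atBot (nhds 0) := by
    have := (tendsto_inv_atTop_zero.comp (tendsto_neg_atBot_atTop : Tendsto (fun t : ℝ => -t) atBot atTop)).neg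
    simpa [one_div, Function.comp, inv_neg] using this
  constructor
  · constructor
    · refine Tendsto.congr (fun t => ?_)
        (by simpa using (hwTop.const_mul σ).sub (hIT.1.const_mul σ))
      rw [hzI t]; ring
    · refine Tendsto.congr (fun t => ?_)
        (by simpa using (hwBot.const_mul σ).sub (hIT.2.const_mul σ))
      rw [hzI t]; ring
  · constructor
    · refine Tendsto.congr (fun t => ?_)
        (by simpa using (hIT.1.const_mul σ).sub (hinvTop.const_mul (σ * I 0)))
      rw [hFTC t]; ring
    · refine Tendsto.congr (fun t => ?_)
        (by simpa using (hIT.2.const_mul σ).sub (hinvBot.const_mul (σ * I 0)))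
      rw [hFTC t]; ring
end

section
/- The pathwise Ornstein–Uhlenbeck function z satisfies the integrated Langevin identity: for every t ∈ ℝ, ∫₀ᵗ z(s) ds + z(t) = z(0) + σ w(t). -/
open MeasureTheory ProbabilityTheory Filter
open scoped ENNReal NNReal

lemma ou_exp_half_integrableOn_Iic (t : ℝ) :
    IntegrableOn (fun u => Real.exp (u / 2)) (Set.Iic t) := by
  have hderiv : ∀ x : ℝ, HasDerivAt (fun u => 2 * Real.exp (u / 2)) (Real.exp (x / 2)) x := by
    intro x
    have h1 : HasDerivAt (fun u : ℝ => u / 2) (1 / 2) x := (hasDerivAt_id x).div_const 2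
    have h2 := (Real.hasDerivAt_exp (x / 2)).comp x h1
    have h3 : HasDerivAt (fun u => 2 * Real.exp (u / 2)) (2 * (Real.exp (x / 2) * (1 / 2))) x :=
      h2.const_mul 2
    convert h3 using 1
    ring
  refine integrableOn_Iic_of_intervalIntegral_norm_bounded (μ := volume) (2 * Real.exp (t / 2)) t
      (fun y => ((Real.continuous_exp.comp
        (continuous_id.div_const 2)).intervalIntegrable y t).1) tendsto_id ?_
  · filter_upwards with y
    have hint : ∫ u in y..t, Real.exp (u / 2)
        = 2 * Real.exp (t / 2) - 2 * Real.exp (y / 2) :=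
      intervalIntegral.integral_eq_sub_of_hasDerivAt (fun x _ => hderiv x)
        ((Real.continuous_exp.comp (continuous_id.div_const 2)).intervalIntegrable _ _)
    have : ∫ u in y..t, ‖Real.exp (u / 2)‖ = ∫ u in y..t, Real.exp (u / 2) := by
      congr 1
      funext u
      exact Real.norm_of_nonneg (Real.exp_pos _).le
    rw [this, hint]
    have := (Real.exp_pos (y / 2)).le
    linarith

/-- The pathwise Ornstein–Uhlenbeck function `z` satisfies the integrated Langevin
identity `∫₀ᵗ z(s) ds + z(t) = z(0) + σ w(t)` for every `t`. -/
theorem ou_integrated_langevin_identity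
    (σ : ℝ) (w : ℝ → ℝ) (hw : Continuous w) (hw0 : w 0 = 0)
    (hwTop : Filter.Tendsto (fun t => w t / t) Filter.atTop (nhds 0))
    (hwBot : Filter.Tendsto (fun t => w t / t) Filter.atBot (nhds 0))
    (z : ℝ → ℝ)
    (hz : ∀ t : ℝ,
      z t = -σ * (∫ τ in Set.Iic (0 : ℝ), Real.exp τ * w (τ + t)) + σ * w t) :
    ∀ t : ℝ, (∫ s in (0 : ℝ)..t, z s) + z t = z 0 + σ * w t := by
  -- Step 0: a linear bound on `w`.
  obtain ⟨C, hC0, hC⟩ : ∃ C : ℝ, 0 ≤ C ∧ ∀ u, |w u| ≤ C + |u| := by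
    have hTop' : Tendsto (fun t => |w t / t|) atTop (nhds 0) := by
      simpa using hwTop.abs
    have hBot' : Tendsto (fun t => |w t / t|) atBot (nhds 0) := by
      simpa using hwBot.abs
    obtain ⟨a, ha⟩ := eventually_atTop.1 (hTop'.eventually_lt_const one_pos)
    obtain ⟨b, hb⟩ := eventually_atBot.1 (hBot'.eventually_lt_const one_pos)
    set a' := max a 1 with ha'
    set b' := min b (-1) with hb'
    obtain ⟨C0, hC0⟩ :=
      (isCompact_Icc (a := b') (b := a')).exists_bound_of_continuousOn hw.continuousOn
    refine ⟨max C0 0, le_max_right _ _, fun u => ?_⟩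
    rcases le_total u b' with hu | hu
    · have hune : u ≠ 0 := by
        have : u ≤ -1 := hu.trans (min_le_right _ _)
        intro h; rw [h] at this; linarith
      have := hb u (hu.trans (min_le_left _ _))
      have heq : |w u| = |w u / u| * |u| := by
        rw [← abs_mul, div_mul_cancel₀ _ hune]
      rw [heq]
      have h1 : |w u / u| * |u| ≤ 1 * |u| :=
        mul_le_mul_of_nonneg_right this.le (abs_nonneg _)
      have : (0 : ℝ) ≤ max C0 0 := le_max_right _ _
      nlinarith [abs_nonneg u]
    · rcases le_total u a' with hu2 | hu2
      · have : ‖w u‖ ≤ C0 := hC0 u ⟨hu, hu2⟩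
        have h2 : |w u| ≤ C0 := by simpa [Real.norm_eq_abs] using this
        have : C0 ≤ max C0 0 := le_max_left _ _
        have := abs_nonneg u
        linarith
      · have hune : u ≠ 0 := by
          have : (1 : ℝ) ≤ u := (le_max_right a 1).trans hu2
          intro h; rw [h] at this; linarith
        have := ha u ((le_max_left a 1).trans hu2)
        have heq : |w u| = |w u / u| * |u| := by
          rw [← abs_mul, div_mul_cancel₀ _ hune]
        rw [heq]
        have h1 : |w u / u| * |u| ≤ 1 * |u| :=
          mul_le_mul_of_nonneg_right this.le (abs_nonneg _)
        have : (0 : ℝ) ≤ max C0 0 := le_max_right _ _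
        nlinarith [abs_nonneg u]
  -- The kernel function.
  set g : ℝ → ℝ := fun u => Real.exp u * w u with hg_def
  have hgc : Continuous g := Real.continuous_exp.mul hw
  -- Step 1: integrability of `g` on every `Iic s`.
  have hgint : ∀ s : ℝ, IntegrableOn g (Set.Iic s) := by
    have h0 : IntegrableOn g (Set.Iic 0) := by
      have hdom : IntegrableOn (fun u => C * Real.exp u + 2 * Real.exp (u / 2))
          (Set.Iic (0 : ℝ)) :=
        ((integrableOn_exp_Iic 0).const_mul C).add
          ((ou_exp_half_integrableOn_Iic 0).const_mul 2)
      refine Integrable.mono' hdom (hgc.aestronglyMeasurable.restrict) ?_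
      refine (ae_restrict_iff' measurableSet_Iic).2 (Filter.Eventually.of_forall ?_)
      intro u hu
      have hu0 : u ≤ 0 := hu
      have h1 : ‖g u‖ = Real.exp u * |w u| := by
        simp [hg_def, abs_mul, abs_of_pos (Real.exp_pos u), Real.norm_eq_abs]
      rw [h1]
      have h2 : Real.exp u * |w u| ≤ Real.exp u * (C + |u|) :=
        mul_le_mul_of_nonneg_left (hC u) (Real.exp_pos u).le
      have h3 : |u| = -u := abs_of_nonpos hu0
      have h4 : -u ≤ 2 * Real.exp (-u / 2) := by
        have := Real.add_one_le_exp (-u / 2)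
        nlinarith [Real.exp_pos (-u / 2)]
      have h5 : Real.exp u * (-u) ≤ Real.exp u * (2 * Real.exp (-u / 2)) :=
        mul_le_mul_of_nonneg_left h4 (Real.exp_pos u).le
      have h6 : Real.exp u * (2 * Real.exp (-u / 2)) = 2 * Real.exp (u / 2) := by
        have huu : -u / 2 + u = u / 2 := by ring
        rw [mul_comm (Real.exp u), mul_assoc, ← Real.exp_add, huu]
      have h8 : Real.exp u * (C + |u|) = C * Real.exp u + Real.exp u * -u := by
        rw [h3]; ring
      linarith
    intro s
    have hIcc : IntegrableOn g (Set.Icc 0 s) := hgc.integrableOn_Icc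
    have hsub : Set.Iic s ⊆ Set.Iic 0 ∪ Set.Icc 0 s := by
      intro x hx
      rcases le_total x 0 with h | h
      · exact Or.inl h
      · exact Or.inr ⟨h, hx⟩
    exact (h0.union hIcc).mono_set hsub
  -- Step 2: the translated integral.
  set J : ℝ → ℝ := fun s => ∫ u in Set.Iic s, g u with hJ_def
  have hI : ∀ s : ℝ, (∫ τ in Set.Iic (0 : ℝ), Real.exp τ * w (τ + s))
      = Real.exp (-s) * J s := by
    intro s
    have heq : ∀ τ : ℝ, Real.exp τ * w (τ + s) = Real.exp (-s) * g (τ + s) := by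
      intro τ
      simp only [hg_def]
      rw [← mul_assoc, ← Real.exp_add]
      ring_nf
    calc (∫ τ in Set.Iic (0 : ℝ), Real.exp τ * w (τ + s))
        = ∫ τ in Set.Iic (0 : ℝ), Real.exp (-s) * g (τ + s) := by
          exact setIntegral_congr_fun measurableSet_Iic fun τ _ => heq τ
      _ = Real.exp (-s) * ∫ τ in Set.Iic (0 : ℝ), g (τ + s) := by
          rw [integral_const_mul]
      _ = Real.exp (-s) * J s := by
          congr 1
          rw [← integral_indicator measurableSet_Iic]
          have hind : ((Set.Iic (0 : ℝ)).indicator fun τ => g (τ + s))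
              = fun τ => (Set.Iic s).indicator g (τ + s) := by
            funext τ
            simp [Set.indicator_apply, Set.mem_Iic, add_le_iff_nonpos_left]
          rw [hind, integral_add_right_eq_self ((Set.Iic s).indicator g) s,
            integral_indicator measurableSet_Iic]
  -- Step 3: `J` is differentiable with derivative `g`.
  have hJderiv : ∀ s : ℝ, HasDerivAt J (g s) s := by
    intro s
    have hJeq : ∀ x : ℝ, J x = J 0 + ∫ u in (0 : ℝ)..x, g u := by
      intro x
      have := intervalIntegral.integral_Iic_sub_Iic (hgint 0) (hgint x)
      simp only [hJ_def]
      linarith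
    have hd : HasDerivAt (fun x => J 0 + ∫ u in (0 : ℝ)..x, g u) (g s) s := by
      have := intervalIntegral.integral_hasDerivAt_right
        (hgc.intervalIntegrable 0 s)
        (hgc.stronglyMeasurableAtFilter _ _)
        hgc.continuousAt
      simpa using this.const_add (J 0)
    exact hd.congr_of_eventuallyEq (Filter.Eventually.of_forall hJeq)
  -- Step 4: `I s = exp (-s) * J s` satisfies `I' = w - I`.
  set I : ℝ → ℝ := fun s => Real.exp (-s) * J s with hI_def
  have hIc : ∀ s : ℝ, HasDerivAt I (w s - I s) s := by
    intro s
    have h1 : HasDerivAt (fun x : ℝ => Real.exp (-x)) (-Real.exp (-s)) s := by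
      have : HasDerivAt (fun x : ℝ => Real.exp (-x)) (Real.exp (-s) * -1) s :=
        (Real.hasDerivAt_exp (-s)).comp s ((hasDerivAt_id s).neg)
      simpa using this
    have h2 := h1.mul (hJderiv s)
    have h3 : -Real.exp (-s) * J s + Real.exp (-s) * g s = w s - I s := by
      simp only [hg_def, hI_def]
      rw [← mul_assoc, ← Real.exp_add]
      ring_nf
      simp
    rw [← h3]
    exact h2
  -- Step 5: `z` in terms of `I`.
  have hz' : ∀ s : ℝ, z s = σ * (w s - I s) := by
    intro s
    rw [hz s, hI s]
    simp only [hI_def]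
    ring
  have hzc : Continuous z := by
    have hIcont : Continuous I := by
      rw [continuous_iff_continuousAt]
      exact fun s => (hIc s).continuousAt
    have : Continuous fun s => σ * (w s - I s) := continuous_const.mul (hw.sub hIcont)
    exact this.congr fun s => (hz' s).symm
  have hderiv : ∀ s : ℝ, HasDerivAt (fun x => σ * I x) (z s) s := by
    intro s
    rw [hz' s]
    exact (hIc s).const_mul σ
  intro t
  have hint : (∫ s in (0 : ℝ)..t, z s) = σ * I t - σ * I 0 :=
    intervalIntegral.integral_eq_sub_of_hasDerivAt (fun s _ => hderiv s)
      (hzc.intervalIntegrable 0 t)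
  rw [hint, hz' t, hz' 0, hw0]
  ring
end

section
/- There exist ρ* > 0 and a function L : (0, ρ*) → [0, ∞) with L(ρ) → 0 as ρ → 0⁺ such that, for every ρ ∈ (0, ρ*), the cut-off map F_ρ is globally Lipschitz on E with Lipschitz constant L(ρ): ‖F_ρ(u₁) − F_ρ(u₂)‖ ≤ L(ρ)‖u₁ − u₂‖ for all u₁, u₂ ∈ E. -/
open MeasureTheory ProbabilityTheory Filter
open scoped ENNReal NNReal

/-- Global Lipschitz property of the cut-off nonlinearity: there are `ρ* > 0` and
`L : (0, ρ*) → [0, ∞)` with `L(ρ) → 0` as `ρ → 0⁺` such that `F_ρ` is globally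
Lipschitz with constant `L(ρ)` for every `ρ ∈ (0, ρ*)`. -/
theorem cutoff_global_lipschitz
    {E G : Type*} [NormedAddCommGroup E] [NormedSpace ℝ E]
    [NormedAddCommGroup G] [NormedSpace ℝ G]
    (F : E → G) (hF : ContDiff ℝ 2 F) (hF0 : F 0 = 0) (hDF0 : fderiv ℝ F 0 = 0)
    (ζ : ℝ → ℝ) (hζsmooth : ContDiff ℝ ((⊤ : ℕ∞) : WithTop ℕ∞) ζ)
    (hζ01 : ∀ s : ℝ, 0 ≤ ζ s ∧ ζ s ≤ 1)
    (hζone : ∀ s : ℝ, s ≤ 1 → ζ s = 1) (hζzero : ∀ s : ℝ, 2 ≤ s → ζ s = 0) :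
    ∃ ρstar > (0 : ℝ), ∃ L : ℝ → ℝ,
      (∀ ρ ∈ Set.Ioo (0 : ℝ) ρstar, 0 ≤ L ρ) ∧
      Filter.Tendsto L (nhdsWithin 0 (Set.Ioi 0)) (nhds 0) ∧
      ∀ ρ ∈ Set.Ioo (0 : ℝ) ρstar, ∀ u₁ u₂ : E,
        ‖ζ (‖u₁‖ / ρ) • F u₁ - ζ (‖u₂‖ / ρ) • F u₂‖ ≤ L ρ * ‖u₁ - u₂‖ := by
  -- Step 1: ζ is globally Lipschitz
  obtain ⟨Kζ, hKζ0, hζlip⟩ : ∃ Kζ : ℝ, 0 ≤ Kζ ∧ ∀ a b : ℝ, |ζ a - ζ b| ≤ Kζ * |a - b| := by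
    have hdiff : Differentiable ℝ ζ := hζsmooth.differentiable (by simp)
    have hcont : ContinuousOn (deriv ζ) (Set.Icc (1:ℝ) 2) :=
      (hζsmooth.continuous_deriv (by exact_mod_cast le_top)).continuousOn
    obtain ⟨C, hC⟩ := isCompact_Icc.exists_bound_of_continuousOn hcont
    have hbound : ∀ x : ℝ, ‖deriv ζ x‖ ≤ max C 0 := by
      intro x
      rcases lt_or_ge x 1 with h | h
      · have hx : deriv ζ x = 0 := by
          have heq : ζ =ᶠ[nhds x] fun _ => (1:ℝ) :=
            Filter.eventually_of_mem (Iio_mem_nhds h) (fun y hy => hζone y (le_of_lt hy))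
          rw [heq.deriv_eq, deriv_const]
        simp [hx]
      · rcases le_or_gt x 2 with h2 | h2
        · exact (hC x ⟨h, h2⟩).trans (le_max_left _ _)
        · have hx : deriv ζ x = 0 := by
            have heq : ζ =ᶠ[nhds x] fun _ => (0:ℝ) :=
              Filter.eventually_of_mem (Ioi_mem_nhds h2) (fun y hy => hζzero y (le_of_lt hy))
            rw [heq.deriv_eq, deriv_const]
          simp [hx]
    set Kζ' : ℝ≥0 := ⟨max C 0, le_max_right _ _⟩ with hKζ'
    have hlipζ : LipschitzWith Kζ' ζ := by
      apply lipschitzWith_of_nnnorm_deriv_le hdiff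
      intro x
      exact_mod_cast hbound x
    refine ⟨max C 0, le_max_right _ _, fun a b => ?_⟩
    have := hlipζ.dist_le_mul a b
    rwa [Real.dist_eq, Real.dist_eq] at this
  -- Step 2: fderiv F is locally Lipschitz at 0
  have hg : ContDiff ℝ 1 (fderiv ℝ F) := hF.fderiv_right (by norm_num)
  obtain ⟨K, t, ht, hlip⟩ := hg.contDiffAt.exists_lipschitzOnWith (x := 0)
  obtain ⟨r₀, hr₀, hball⟩ := Metric.mem_nhds_iff.mp ht
  set K' : ℝ := (K : ℝ) with hK'
  have hK'0 : 0 ≤ K' := K.coe_nonneg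
  have hderivb : ∀ z : E, ‖z‖ < r₀ → ‖fderiv ℝ F z‖ ≤ K' * ‖z‖ := by
    intro z hz
    have hz' : z ∈ t := hball (mem_ball_zero_iff.2 hz)
    have h0 : (0 : E) ∈ t := hball (mem_ball_zero_iff.2 (by simpa using hr₀))
    have := hlip.dist_le_mul z hz' 0 h0
    rwa [hDF0, dist_zero_right, dist_zero_right] at this
  -- F-difference bound on balls
  have hFd : ∀ r : ℝ, r ≤ r₀ → ∀ x y : E, ‖x‖ < r → ‖y‖ < r →
      ‖F x - F y‖ ≤ (K' * r) * ‖x - y‖ := by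
    intro r hr x y hx hy
    refine Convex.norm_image_sub_le_of_norm_fderiv_le (s := Metric.ball (0:E) r)
      (fun z _ => (hF.differentiable (by norm_num)).differentiableAt) ?_ (convex_ball 0 r)
      (mem_ball_zero_iff.2 hy) (mem_ball_zero_iff.2 hx)
    intro z hz
    have hz' : ‖z‖ < r := mem_ball_zero_iff.1 hz
    exact (hderivb z (lt_of_lt_of_le hz' hr)).trans
      (mul_le_mul_of_nonneg_left (le_of_lt hz') hK'0)
  -- Constants
  set C0 : ℝ := 2 * K' + 4 * K' * Kζ with hC0
  have hC0nn : 0 ≤ C0 := by positivity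
  refine ⟨r₀ / 2, by linarith, fun ρ => C0 * ρ, ?_, ?_, ?_⟩
  · intro ρ hρ; exact mul_nonneg hC0nn (le_of_lt hρ.1)
  · have h1 : Filter.Tendsto (fun ρ : ℝ => C0 * ρ) (nhds 0) (nhds (C0 * 0)) :=
      (continuous_const.mul continuous_id).tendsto 0
    rw [mul_zero] at h1
    exact h1.mono_left nhdsWithin_le_nhds
  · intro ρ hρ
    obtain ⟨hρ0, hρr⟩ := hρ
    have h2ρ : 2 * ρ ≤ r₀ := by linarith
    have hLnn : 0 ≤ C0 * ρ := mul_nonneg hC0nn (le_of_lt hρ0)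
    suffices H : ∀ u₁ u₂ : E, ‖u₁‖ ≤ ‖u₂‖ →
        ‖ζ (‖u₁‖ / ρ) • F u₁ - ζ (‖u₂‖ / ρ) • F u₂‖ ≤ C0 * ρ * ‖u₁ - u₂‖ by
      intro u₁ u₂
      rcases le_total ‖u₁‖ ‖u₂‖ with h | h
      · exact H u₁ u₂ h
      · have := H u₂ u₁ h
        rwa [norm_sub_rev, norm_sub_rev u₂ u₁] at this
    intro u₁ u₂ h12
    set D := ‖u₁ - u₂‖ with hD
    have hDnn : 0 ≤ D := norm_nonneg _
    rcases lt_or_ge ‖u₁‖ (2 * ρ) with h1 | h1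
    · -- ‖u₁‖ < 2ρ: real work
      -- decomposition
      have hdec : ζ (‖u₁‖ / ρ) • F u₁ - ζ (‖u₂‖ / ρ) • F u₂ =
          ζ (‖u₂‖ / ρ) • (F u₁ - F u₂) + (ζ (‖u₁‖ / ρ) - ζ (‖u₂‖ / ρ)) • F u₁ := by
        rw [smul_sub, sub_smul]; abel
      -- bound on F u₁
      have hFu1 : ‖F u₁‖ ≤ K' * (2 * ρ) * ‖u₁‖ := by
        have := hFd (2 * ρ) h2ρ u₁ 0 h1 (by simpa using by linarith)
        simpa [hF0] using this
      -- term A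
      have hA : ‖ζ (‖u₂‖ / ρ) • (F u₁ - F u₂)‖ ≤ K' * (2 * ρ) * D := by
        rcases lt_or_ge ‖u₂‖ (2 * ρ) with h2 | h2
        · have hFd' := hFd (2 * ρ) h2ρ u₁ u₂ h1 h2
          rw [norm_smul, Real.norm_eq_abs,
            abs_of_nonneg (hζ01 (‖u₂‖ / ρ)).1]
          calc ζ (‖u₂‖ / ρ) * ‖F u₁ - F u₂‖ ≤ 1 * ‖F u₁ - F u₂‖ :=
                mul_le_mul_of_nonneg_right (hζ01 _).2 (norm_nonneg _)
            _ = ‖F u₁ - F u₂‖ := one_mul _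
            _ ≤ K' * (2 * ρ) * D := hFd'
        · have : ζ (‖u₂‖ / ρ) = 0 := hζzero _ (by rw [le_div_iff₀ hρ0]; linarith)
          rw [this, zero_smul, norm_zero]
          positivity
      -- term B
      have hB : ‖(ζ (‖u₁‖ / ρ) - ζ (‖u₂‖ / ρ)) • F u₁‖ ≤ 4 * K' * Kζ * ρ * D := by
        rw [norm_smul, Real.norm_eq_abs]
        have habs : |ζ (‖u₁‖ / ρ) - ζ (‖u₂‖ / ρ)| ≤ Kζ * (D / ρ) := by
          refine (hζlip _ _).trans ?_
          rw [div_sub_div_same, abs_div, abs_of_pos hρ0]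
          refine mul_le_mul_of_nonneg_left ?_ hKζ0
          gcongr
          exact abs_norm_sub_norm_le u₁ u₂
        have hFu1' : ‖F u₁‖ ≤ K' * (2 * ρ) * (2 * ρ) := by
          refine hFu1.trans (mul_le_mul_of_nonneg_left (le_of_lt h1) ?_)
          positivity
        calc |ζ (‖u₁‖ / ρ) - ζ (‖u₂‖ / ρ)| * ‖F u₁‖
            ≤ (Kζ * (D / ρ)) * (K' * (2 * ρ) * (2 * ρ)) := by
              apply mul_le_mul habs hFu1' (norm_nonneg _)
              positivity
          _ = 4 * K' * Kζ * ρ * D := by field_simp; ring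
      calc ‖ζ (‖u₁‖ / ρ) • F u₁ - ζ (‖u₂‖ / ρ) • F u₂‖
          ≤ ‖ζ (‖u₂‖ / ρ) • (F u₁ - F u₂)‖ + ‖(ζ (‖u₁‖ / ρ) - ζ (‖u₂‖ / ρ)) • F u₁‖ := by
            rw [hdec]; exact norm_add_le _ _
        _ ≤ K' * (2 * ρ) * D + 4 * K' * Kζ * ρ * D := add_le_add hA hB
        _ = C0 * ρ * D := by rw [hC0]; ring
    · -- both norms ≥ 2ρ: both ζ's vanish
      have hz1 : ζ (‖u₁‖ / ρ) = 0 := hζzero _ (by rw [le_div_iff₀ hρ0]; linarith)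
      have hz2 : ζ (‖u₂‖ / ρ) = 0 := hζzero _ (by rw [le_div_iff₀ hρ0]; linarith)
      rw [hz1, hz2, zero_smul, zero_smul, sub_zero, norm_zero]
      exact mul_nonneg hLnn hDnn
end

section
/- The nonnegative function τ' ↦ exp((β₁ + β₂ − β₃)τ' + σ w(τ')) · ∫_{τ'}^t exp(β₂ τ + σ w(τ)) dτ is integrable on (−∞, t]; consequently the memory coefficient N₂(t) := exp(−(β₁ + 2β₂ − β₃)t − 2σ w(t)) · ∫_{−∞}^t exp((β₁ + β₂ − β₃)τ' + σ w(τ')) ( ∫_{τ'}^t exp(β₂ τ + σ w(τ)) dτ ) dτ' is well defined and finite. -/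
open MeasureTheory ProbabilityTheory Filter
open scoped ENNReal NNReal

lemma exp_mul_integrableOn_Iic {c : ℝ} (hc : 0 < c) (S : ℝ) :
    MeasureTheory.IntegrableOn (fun x => Real.exp (c * x)) (Set.Iic S)
      MeasureTheory.volume := by
  have hcont : Continuous fun x : ℝ => Real.exp (c * x) := by fun_prop
  refine integrableOn_Iic_of_intervalIntegral_norm_bounded (Real.exp (c * S) / c) S
    (fun y : ℝ => (hcont.intervalIntegrable y S).1) tendsto_id ?_
  filter_upwards with y
  have hnorm : (∫ x in y..S, ‖Real.exp (c * x)‖) = ∫ x in y..S, Real.exp (c * x) := by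
    simp [Real.norm_eq_abs, abs_of_nonneg (Real.exp_pos _).le]
  rw [hnorm, intervalIntegral.integral_comp_mul_left Real.exp hc.ne',
    integral_exp, smul_eq_mul]
  rw [div_eq_inv_mul]
  have h1 : 0 < c⁻¹ := inv_pos.mpr hc
  nlinarith [Real.exp_pos (c * y)]

lemma memory_aux
    (w : ℝ → ℝ) (hw : Continuous w)
    (hsub : Filter.Tendsto (fun s => w s / s) Filter.atBot (nhds 0))
    (σ t β₁ β₂ β₃ : ℝ) (h1 : 0 < β₁ + β₂ - β₃) (h2 : 0 < β₁ + 2 * β₂ - β₃)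
    (δ : ℝ) (hδ0 : 0 < δ) (hδ1 : δ < β₁ + β₂ - β₃)
    (hδ2 : 2 * δ < β₁ + 2 * β₂ - β₃) (hδb : β₂ - δ ≠ 0) :
    MeasureTheory.IntegrableOn
      (fun τ' => Real.exp ((β₁ + β₂ - β₃) * τ' + σ * w τ') *
        ∫ τ in τ'..t, Real.exp (β₂ * τ + σ * w τ))
      (Set.Iic t) MeasureTheory.volume := by
  have ha : (0:ℝ) < β₁ + β₂ - β₃ := h1
  set b : ℝ := β₂ - δ with hbdef
  set c : ℝ := min (β₁ + β₂ - β₃ - δ) (β₁ + 2 * β₂ - β₃ - 2 * δ) with hcdef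
  have hc0 : 0 < c := lt_min (by linarith) (by linarith)
  have hgc : Continuous fun τ => Real.exp (β₂ * τ + σ * w τ) := by fun_prop
  have hgi : ∀ p q : ℝ, IntervalIntegrable (fun τ => Real.exp (β₂ * τ + σ * w τ))
      volume p q := fun p q => hgc.intervalIntegrable p q
  have hfc : Continuous fun τ' => Real.exp ((β₁ + β₂ - β₃) * τ' + σ * w τ') *
      ∫ τ in τ'..t, Real.exp (β₂ * τ + σ * w τ) := by
    have hprim : Continuous fun τ' => ∫ τ in t..τ', Real.exp (β₂ * τ + σ * w τ) :=
      intervalIntegral.continuous_primitive hgi t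
    have hprim' : Continuous fun τ' => ∫ τ in τ'..t, Real.exp (β₂ * τ + σ * w τ) := by
      exact hprim.neg.congr fun τ' => (intervalIntegral.integral_symm t τ').symm
    exact (Real.continuous_exp.comp (by fun_prop)).mul hprim'
  -- choose the threshold S
  have hε : 0 < δ / (|σ| + 1) := div_pos hδ0 (by positivity)
  have hev : ∀ᶠ s in atBot, |w s / s| < δ / (|σ| + 1) := by
    have h := Metric.tendsto_nhds.mp hsub _ hε
    simpa only [Real.dist_eq, sub_zero] using h
  obtain ⟨S₀, hS₀⟩ := eventually_atBot.mp hev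
  set S : ℝ := min S₀ (min t (-1)) with hSdef
  have hSt : S ≤ t := le_trans (min_le_right _ _) (min_le_left _ _)
  have hSneg : S ≤ -1 := le_trans (min_le_right _ _) (min_le_right _ _)
  have hkey : ∀ s ≤ S, |σ * w s| ≤ δ * (-s) := by
    intro s hs
    have hs0 : s < 0 := lt_of_le_of_lt (hs.trans hSneg) (by norm_num)
    have hws0 := hS₀ s (hs.trans (min_le_left _ _))
    have hws : |w s| ≤ δ / (|σ| + 1) * |s| := by
      have hrw : w s = (w s / s) * s := (div_mul_cancel₀ (w s) hs0.ne).symm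
      rw [hrw, abs_mul]
      exact mul_le_mul_of_nonneg_right hws0.le (abs_nonneg _)
    rw [abs_mul]
    calc |σ| * |w s| ≤ |σ| * (δ / (|σ| + 1) * |s|) :=
          mul_le_mul_of_nonneg_left hws (abs_nonneg _)
      _ ≤ δ * (-s) := by
          rw [abs_of_neg hs0]
          rw [← mul_assoc, mul_div_assoc']
          rw [div_mul_eq_mul_div, div_le_iff₀ (by positivity)]
          nlinarith [abs_nonneg σ]
  -- the big-O estimate at -∞
  have hbig : (fun τ' => Real.exp ((β₁ + β₂ - β₃) * τ' + σ * w τ') *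
      ∫ τ in τ'..t, Real.exp (β₂ * τ + σ * w τ)) =O[atBot]
      fun τ' => Real.exp (c * τ') := by
    rw [Asymptotics.isBigO_iff]
    set C₀ : ℝ := ∫ τ in S..t, Real.exp (β₂ * τ + σ * w τ) with hC₀def
    have hC₀0 : 0 ≤ C₀ :=
      intervalIntegral.integral_nonneg hSt fun x _ => (Real.exp_pos _).le
    set r : ℝ := |b|⁻¹ with hrdef
    have hr : 0 ≤ r := inv_nonneg.mpr (abs_nonneg _)
    refine ⟨C₀ + r * Real.exp (b * S) + r, eventually_atBot.mpr ⟨S, fun τ' hτ' => ?_⟩⟩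
    have hτ't : τ' ≤ t := hτ'.trans hSt
    have hτ'0 : τ' ≤ 0 := le_trans (hτ'.trans hSneg) (by norm_num)
    have hF0 : 0 ≤ ∫ τ in τ'..t, Real.exp (β₂ * τ + σ * w τ) :=
      intervalIntegral.integral_nonneg hτ't fun x _ => (Real.exp_pos _).le
    have hsplit : (∫ τ in τ'..t, Real.exp (β₂ * τ + σ * w τ))
        = (∫ τ in τ'..S, Real.exp (β₂ * τ + σ * w τ)) + C₀ :=
      (intervalIntegral.integral_add_adjacent_intervals (hgi τ' S) (hgi S t)).symm
    have hmono : (∫ τ in τ'..S, Real.exp (β₂ * τ + σ * w τ))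
        ≤ ∫ τ in τ'..S, Real.exp (b * τ) := by
      refine intervalIntegral.integral_mono_on hτ' (hgi τ' S)
        ((Real.continuous_exp.comp (by fun_prop)).intervalIntegrable _ _) fun x hx => ?_
      have hxS : x ≤ S := hx.2
      have hk := hkey x hxS
      have hk' : σ * w x ≤ δ * (-x) := (le_abs_self _).trans hk
      exact Real.exp_le_exp.mpr (by rw [hbdef]; linarith)
    have hval : (∫ τ in τ'..S, Real.exp (b * τ))
        = b⁻¹ * (Real.exp (b * S) - Real.exp (b * τ')) := by
      rw [intervalIntegral.integral_comp_mul_left Real.exp hδb,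
        integral_exp, smul_eq_mul]
    have hvle : (∫ τ in τ'..S, Real.exp (b * τ))
        ≤ r * (Real.exp (b * S) + Real.exp (b * τ')) := by
      rw [hval]
      calc b⁻¹ * (Real.exp (b * S) - Real.exp (b * τ'))
          ≤ |b⁻¹ * (Real.exp (b * S) - Real.exp (b * τ'))| := le_abs_self _
        _ = r * |Real.exp (b * S) - Real.exp (b * τ')| := by rw [abs_mul, abs_inv]
        _ ≤ r * (Real.exp (b * S) + Real.exp (b * τ')) := by
            refine mul_le_mul_of_nonneg_left (abs_le.mpr ⟨?_, ?_⟩) hr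
            · nlinarith [Real.exp_pos (b * S), Real.exp_pos (b * τ')]
            · nlinarith [Real.exp_pos (b * S), Real.exp_pos (b * τ')]
    have hFle : (∫ τ in τ'..t, Real.exp (β₂ * τ + σ * w τ))
        ≤ C₀ + r * (Real.exp (b * S) + Real.exp (b * τ')) := by
      rw [hsplit]
      linarith [hmono.trans hvle]
    have hE : Real.exp ((β₁ + β₂ - β₃) * τ' + σ * w τ')
        ≤ Real.exp ((β₁ + β₂ - β₃ - δ) * τ') := by
      have hk := hkey τ' hτ'
      have hk' : σ * w τ' ≤ δ * (-τ') := (le_abs_self _).trans hk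
      exact Real.exp_le_exp.mpr (by linarith)
    have e1 : Real.exp ((β₁ + β₂ - β₃ - δ) * τ') ≤ Real.exp (c * τ') :=
      Real.exp_le_exp.mpr (mul_le_mul_of_nonpos_right (min_le_left _ _) hτ'0)
    have e2 : Real.exp ((β₁ + β₂ - β₃ - δ) * τ') * Real.exp (b * τ')
        ≤ Real.exp (c * τ') := by
      rw [← Real.exp_add]
      refine Real.exp_le_exp.mpr ?_
      have : (β₁ + β₂ - β₃ - δ) * τ' + b * τ' = (β₁ + 2 * β₂ - β₃ - 2 * δ) * τ' := by
        rw [hbdef]; ring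
      rw [this]
      exact mul_le_mul_of_nonpos_right (min_le_right _ _) hτ'0
    have hnormf : ‖Real.exp ((β₁ + β₂ - β₃) * τ' + σ * w τ') *
        ∫ τ in τ'..t, Real.exp (β₂ * τ + σ * w τ)‖
        = Real.exp ((β₁ + β₂ - β₃) * τ' + σ * w τ') *
          ∫ τ in τ'..t, Real.exp (β₂ * τ + σ * w τ) := by
      rw [Real.norm_eq_abs, abs_of_nonneg (mul_nonneg (Real.exp_pos _).le hF0)]
    rw [hnormf, Real.norm_eq_abs, abs_of_nonneg (Real.exp_pos _).le]
    have hmul : Real.exp ((β₁ + β₂ - β₃) * τ' + σ * w τ') *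
        ∫ τ in τ'..t, Real.exp (β₂ * τ + σ * w τ)
        ≤ Real.exp ((β₁ + β₂ - β₃ - δ) * τ') *
          (C₀ + r * (Real.exp (b * S) + Real.exp (b * τ'))) :=
      mul_le_mul hE hFle hF0 (Real.exp_pos _).le
    nlinarith [mul_nonneg hC₀0 (sub_nonneg.mpr e1),
      mul_nonneg (mul_nonneg hr (Real.exp_pos (b * S)).le) (sub_nonneg.mpr e1),
      mul_nonneg hr (sub_nonneg.mpr e2)]
  have hloc : LocallyIntegrableOn
      (fun τ' => Real.exp ((β₁ + β₂ - β₃) * τ' + σ * w τ') *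
        ∫ τ in τ'..t, Real.exp (β₂ * τ + σ * w τ)) (Set.Iic t) volume :=
    (hfc.locallyIntegrable).locallyIntegrableOn _
  exact hloc.integrableOn_of_isBigO_atBot hbig
    ⟨Set.Iic 0, Iic_mem_atBot 0, exp_mul_integrableOn_Iic hc0 0⟩

/-- Under the non-resonance conditions `β₁ + β₂ - β₃ > 0` and
`β₁ + 2β₂ - β₃ > 0`, the nonnegative function
`τ' ↦ exp((β₁+β₂-β₃)τ' + σ w(τ')) ∫_{τ'}^t exp(β₂ τ + σ w(τ)) dτ` is integrable
on `(-∞, t]`, so the memory coefficient `N₂(t)` is well defined and finite. -/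
theorem memory_coefficient_integrable
    (w : ℝ → ℝ) (hw : Continuous w)
    (hsub : Filter.Tendsto (fun s => w s / s) Filter.atBot (nhds 0))
    (σ t β₁ β₂ β₃ : ℝ) (h1 : 0 < β₁ + β₂ - β₃) (h2 : 0 < β₁ + 2 * β₂ - β₃) :
    MeasureTheory.IntegrableOn
      (fun τ' => Real.exp ((β₁ + β₂ - β₃) * τ' + σ * w τ') *
        ∫ τ in τ'..t, Real.exp (β₂ * τ + σ * w τ))
      (Set.Iic t) MeasureTheory.volume := by
  have hm0 : 0 < min (β₁ + β₂ - β₃) ((β₁ + 2 * β₂ - β₃) / 2) := lt_min h1 (by linarith)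
  have hma : min (β₁ + β₂ - β₃) ((β₁ + 2 * β₂ - β₃) / 2) ≤ β₁ + β₂ - β₃ := min_le_left _ _
  have hmb : min (β₁ + β₂ - β₃) ((β₁ + 2 * β₂ - β₃) / 2) ≤ (β₁ + 2 * β₂ - β₃) / 2 :=
    min_le_right _ _
  set m : ℝ := min (β₁ + β₂ - β₃) ((β₁ + 2 * β₂ - β₃) / 2) with hmdef
  by_cases hb : β₂ = m / 2
  · exact memory_aux w hw hsub σ t β₁ β₂ β₃ h1 h2 (m / 4) (by linarith) (by linarith)
      (by linarith) (by rw [hb]; intro h; linarith [sub_eq_zero.mp h])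
  · exact memory_aux w hw hsub σ t β₁ β₂ β₃ h1 h2 (m / 2) (by linarith) (by linarith)
      (by linarith) (sub_ne_zero.mpr hb)
end
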